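/- arXiv:1905.11815 — 7 statements merged into one kernel-verified Lean document; each statement's English description precedes it below -/
import Mathlib

section
/- The generating function identity: the sum over n from 0 to MN of p(M,N,n)·q^n equals the Gaussian binomial coefficient [M+N choose N]_q. -/
/-- The number of partitions of n into at most N parts, each of size at most M. -/
def restrictedPartitions (M N n : ℕ) : ℕ :=
  ((Finset.univ : Finset (Fin N → Fin (M + 1))).filter
    (fun f => (∀ i j : Fin N, i ≤ j → (f j : ℕ) ≤ (f i : ℕ)) ∧
      ∑ i, (f i : ℕ) = n)).card

/-!
A partition with at most `N` parts, each at most `M`, is an antitone tuple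
`f : Fin N → Fin (M + 1)` (pad with zero parts). Let `G(M, N) = ∑_f q^|f|`. Splitting according to
whether the smallest part `f (last N)` vanishes gives the q-Pascal rule
`G(M+1, N+1) = G(M+1, N) + q^(N+1) G(M, N+1)`: either drop a zero part, or subtract one from all
`N + 1` parts. With `(q;q)_k = ∏_{j<k} (1 - q^(j+1))`, the identity
`G(M, N) (q;q)_M (q;q)_N = (q;q)_(M+N)` then follows by induction, the last factors matching via
`1 - q^(M+N+2) = (1 - q^(N+1)) + q^(N+1) (1 - q^(M+1))`.
-/

open Finset Polynomial

def boxPartitions (M N : ℕ) : Finset (Fin N → Fin (M + 1)) := {f | Antitone f}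

noncomputable def boxPartitionsPoly (R : Type*) [CommSemiring R] (M N : ℕ) : R[X] :=
  ∑ f ∈ boxPartitions M N, X ^ ∑ i, (f i : ℕ)

noncomputable def qPochhammer (R : Type*) [CommRing R] (k : ℕ) : R[X] :=
  ∏ j ∈ range k, (1 - X ^ (j + 1))

theorem restrictedPartitions_eq_card (M N n : ℕ) :
    restrictedPartitions M N n = #{f ∈ boxPartitions M N | ∑ i, (f i : ℕ) = n} := by
  rw [boxPartitions, filter_filter]
  rfl

theorem sum_val_le_mul {M N : ℕ} (f : Fin N → Fin (M + 1)) : ∑ i, (f i : ℕ) ≤ M * N := by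
  simpa [mul_comm] using sum_le_sum fun i (_ : i ∈ univ) => Fin.is_le (f i)

section
variable {R : Type*} [CommSemiring R]

theorem sum_restrictedPartitions_mul_X_pow (M N : ℕ) :
    ∑ n ∈ range (M * N + 1), (restrictedPartitions M N n : R[X]) * X ^ n =
      boxPartitionsPoly R M N := by
  rw [boxPartitionsPoly, ← sum_fiberwise_of_maps_to' (t := range (M * N + 1))
    (fun f _ => mem_range_succ_iff.2 (sum_val_le_mul f))]
  simp only [sum_const, nsmul_eq_mul, restrictedPartitions_eq_card]

theorem boxPartitionsPoly_zero_left (N : ℕ) : boxPartitionsPoly R 0 N = 1 := by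
  simp [boxPartitionsPoly, boxPartitions, Subsingleton.antitone']

theorem boxPartitionsPoly_zero_right (M : ℕ) : boxPartitionsPoly R M 0 = 1 := by
  simp [boxPartitionsPoly, boxPartitions, Subsingleton.antitone]

theorem Antitone.snoc_zero {M N : ℕ} {g : Fin N → Fin (M + 1)} (hg : Antitone g) :
    Antitone (Fin.snoc g 0 : Fin (N + 1) → Fin (M + 1)) := by
  intro i j hij
  induction j using Fin.lastCases with
  | last => simp
  | cast j =>
    induction i using Fin.lastCases with
    | last => exact absurd hij (by simp)
    | cast i => simpa using hg (Fin.castSucc_le_castSucc_iff.1 hij)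

theorem sum_boxPartitions_last_eq_zero (M N : ℕ) :
    ∑ f ∈ boxPartitions M (N + 1) with f (Fin.last N) = 0, (X : R[X]) ^ ∑ i, (f i : ℕ) =
      boxPartitionsPoly R M N := by
  refine sum_nbij' Fin.init (fun g => Fin.snoc g 0) ?_ ?_ ?_ ?_ ?_
  · simp only [boxPartitions, mem_filter, mem_univ, true_and, and_imp]
    exact fun f hf _ => hf.comp_monotone Fin.strictMono_castSucc.monotone
  · simp only [boxPartitions, mem_filter, mem_univ, true_and]
    exact fun g hg => ⟨hg.snoc_zero, Fin.snoc_last _ _⟩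
  · simp only [boxPartitions, mem_filter, mem_univ, true_and, and_imp]
    intro f _ hf
    rw [← hf, Fin.snoc_init_self]
  · simp
  · simp only [boxPartitions, mem_filter, mem_univ, true_and, and_imp]
    intro f _ hf
    rw [Fin.sum_univ_castSucc, hf]
    rfl

theorem sum_boxPartitions_last_ne_zero (M N : ℕ) :
    ∑ f ∈ boxPartitions (M + 1) (N + 1) with f (Fin.last N) ≠ 0, (X : R[X]) ^ ∑ i, (f i : ℕ) =
      X ^ (N + 1) * boxPartitionsPoly R M (N + 1) := by
  rw [boxPartitionsPoly, mul_sum]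
  refine (sum_nbij' (fun g => Fin.succ ∘ g) (fun f => Fin.predAbove 0 ∘ f) ?_ ?_ ?_ ?_ ?_).symm
  · simp only [boxPartitions, mem_filter, mem_univ, true_and]
    exact fun g hg => ⟨Fin.strictMono_succ.monotone.comp_antitone hg, Fin.succ_ne_zero _⟩
  · simp only [boxPartitions, mem_filter, mem_univ, true_and, and_imp]
    exact fun f hf _ => (Fin.predAbove_right_monotone 0).comp_antitone hf
  · simp [Function.comp_def]
  · simp only [boxPartitions, mem_filter, mem_univ, true_and, and_imp]
    intro f hf hlast
    funext i
    exact Fin.succ_predAbove_zero fun h =>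
      hlast (Fin.le_zero_iff.1 ((hf (Fin.le_last i)).trans_eq h))
  · intro g _
    simp only [Function.comp_apply, Fin.val_succ, sum_add_distrib, sum_const, card_univ,
      Fintype.card_fin, smul_eq_mul, mul_one, pow_add]
    ring

theorem boxPartitionsPoly_succ_succ (M N : ℕ) :
    boxPartitionsPoly R (M + 1) (N + 1) =
      boxPartitionsPoly R (M + 1) N + X ^ (N + 1) * boxPartitionsPoly R M (N + 1) := by
  rw [boxPartitionsPoly, ← sum_filter_add_sum_filter_not _ (fun f => f (Fin.last N) = 0),
    sum_boxPartitions_last_eq_zero, sum_boxPartitions_last_ne_zero]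

end

section
variable {R : Type*} [CommRing R]

theorem boxPartitionsPoly_mul_qPochhammer (M N : ℕ) :
    boxPartitionsPoly R M N * (qPochhammer R M * qPochhammer R N) = qPochhammer R (M + N) := by
  induction M generalizing N with
  | zero => simp [boxPartitionsPoly_zero_left, qPochhammer]
  | succ M ihM =>
    induction N with
    | zero => simp [boxPartitionsPoly_zero_right, qPochhammer]
    | succ N ihN =>
      have hM := ihM (N + 1)
      simp only [qPochhammer, prod_range_succ, show M + 1 + N = M + N + 1 by omega,
        show M + (N + 1) = M + N + 1 by omega, show M + 1 + (N + 1) = M + N + 1 + 1 by omega]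
        at hM ihN ⊢
      rw [boxPartitionsPoly_succ_succ]
      linear_combination (1 - X ^ (N + 1)) * ihN + X ^ (N + 1) * (1 - X ^ (M + 1)) * hM

end

open Polynomial in
/-- ∑_{n=0}^{MN} p(M,N,n) q^n is the Gaussian binomial coefficient
[M+N choose N]_q, stated with denominators cleared. -/
theorem restrictedPartitions_generating_function (M N : ℕ) :
    (∑ n ∈ Finset.range (M * N + 1),
        (restrictedPartitions M N n : Polynomial ℤ) * X ^ n) *
      ((∏ j ∈ Finset.range M, (1 - X ^ (j + 1))) *
        ∏ j ∈ Finset.range N, (1 - X ^ (j + 1)))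
      = ∏ j ∈ Finset.range (M + N), (1 - X ^ (j + 1)) := by
  rw [sum_restrictedPartitions_mul_X_pow]
  exact boxPartitionsPoly_mul_qPochhammer M N
end

section
/- If gcd(k, l) = 1, then for any residues i, j modulo l, the number of compositions (n₁,...,n_l) of k+l into l positive parts with Σ_α n_α·(l+1-α) ≡ i (mod l) equals the number of such compositions with the weighted sum ≡ j (mod l). -/
/-!
Rotating a composition, `n ↦ n ∘ (· + 1)`, permutes the compositions of `k + l` into `l`
parts and, since the weight `l - a` of position `a` is `-a` mod `l`, adds
`n₁ + ⋯ + n_l = k + l ≡ k` to the weighted sum mod `l`. So the count is a `k`-periodic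
function on `ZMod l`, and a period that is a unit generates `ZMod l` additively, which makes
the count constant.
-/

/-- The number of compositions (n₁,...,n_l) of k+l into l positive parts whose
weighted sum n₁·l + n₂·(l-1) + ... + n_l·1 is congruent to i mod l. -/
def weightedCompCount (k l : ℕ) (i : ZMod l) : ℕ :=
  ((Finset.univ : Finset (Fin l → Fin (k + l + 1))).filter
    (fun n => (∀ a, 0 < (n a : ℕ)) ∧ (∑ a, (n a : ℕ)) = k + l ∧
      ((∑ a : Fin l, (n a : ℕ) * (l - (a : ℕ)) : ℕ) : ZMod l) = i)).card

theorem ZMod.eq_of_periodic_of_isUnit {l : ℕ} {α : Type*} {f : ZMod l → α} {c : ZMod l}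
    (hf : Function.Periodic f c) (hc : IsUnit c) (i j : ZMod l) : f i = f j := by
  obtain ⟨u, rfl⟩ := hc
  have hj : j = i + (((j - i) * ↑u⁻¹ : ZMod l).cast : ℤ) • (u : ZMod l) := by
    rw [zsmul_eq_mul, ZMod.intCast_zmod_cast, mul_assoc, Units.inv_mul, mul_one, add_sub_cancel]
  rw [hj, hf.zsmul _ i]

theorem Fin.natCast_add_one_eq {l : ℕ} [NeZero l] (a : Fin l) :
    (((a + 1 : Fin l) : ℕ) : ZMod l) = (a : ℕ) + 1 := by
  rw [Fin.val_add, ZMod.natCast_mod]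
  simp

theorem natCast_sum_mul_sub_val_comp_add_one {l : ℕ} [NeZero l] (n : Fin l → ℕ) :
    ((∑ a : Fin l, n (a + 1) * (l - (a : ℕ)) : ℕ) : ZMod l) =
      ((∑ a : Fin l, n a * (l - (a : ℕ)) : ℕ) : ZMod l) + ((∑ a, n a : ℕ) : ZMod l) := by
  have hweight (a : Fin l) : ((l - (a : ℕ) : ℕ) : ZMod l) = -(a : ℕ) := by
    rw [Nat.cast_sub a.is_lt.le, ZMod.natCast_self, zero_sub]
  push_cast [hweight]
  rw [← Equiv.sum_comp (Equiv.addRight (1 : Fin l))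
      (fun a => (n a : ZMod l) * -((a : ℕ) : ZMod l)),
    ← Equiv.sum_comp (Equiv.addRight (1 : Fin l)) (fun a => (n a : ZMod l)),
    ← Finset.sum_add_distrib]
  simp only [Equiv.coe_addRight, Fin.natCast_add_one_eq]
  refine Finset.sum_congr rfl fun a _ => ?_
  ring

theorem weightedCompCount_periodic (k l : ℕ) [NeZero l] :
    Function.Periodic (weightedCompCount k l) (k : ZMod l) := by
  intro i
  let rotate : (Fin l → Fin (k + l + 1)) ≃ (Fin l → Fin (k + l + 1)) :=
    (Equiv.addRight 1).symm.arrowCongr (Equiv.refl _)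
  refine (Finset.card_equiv rotate fun n => ?_).symm
  simp only [Finset.mem_filter, Finset.mem_univ, true_and, rotate, Equiv.arrowCongr_apply,
    Equiv.symm_symm, Equiv.coe_refl, Function.comp_apply, id, Equiv.coe_addRight]
  have hpos : (∀ a, 0 < (n (a + 1) : ℕ)) ↔ ∀ a, 0 < (n a : ℕ) :=
    (Equiv.addRight (1 : Fin l)).surjective.forall (p := fun a => 0 < (n a : ℕ)) |>.symm
  have hsum_rotate : ∑ a, (n (a + 1) : ℕ) = ∑ a, (n a : ℕ) :=
    Equiv.sum_comp (Equiv.addRight (1 : Fin l)) (fun a => (n a : ℕ))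
  rw [hpos, hsum_rotate, natCast_sum_mul_sub_val_comp_add_one (fun a => (n a : ℕ))]
  refine and_congr_right fun _ => and_congr_right fun hsum => ?_
  rw [hsum, Nat.cast_add, ZMod.natCast_self, add_zero, add_left_inj]

theorem weightedCompCount_eq_general (k l : ℕ) (hl : 0 < l)
    (h : Nat.gcd k l = 1) (i j : ZMod l) :
    weightedCompCount k l i = weightedCompCount k l j := by
  have : NeZero l := ⟨hl.ne'⟩
  exact ZMod.eq_of_periodic_of_isUnit (weightedCompCount_periodic k l)
    ((ZMod.isUnit_iff_coprime k l).mpr h) i j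

/-- If gcd(k,l)=1 then the number of compositions of k+l into l positive parts is
equidistributed over residues mod l of the weighted sum. -/
theorem weightedCompCount_eq (k l : ℕ) (hk : 0 < k) (hl : 0 < l)
    (h : Nat.gcd k l = 1) (i j : ZMod l) :
    weightedCompCount k l i = weightedCompCount k l j :=
  weightedCompCount_eq_general k l hl h i j
end

section
/- For an odd prime p and any k with 2 ≤ k ≤ p-1, the number of partitions into exactly k parts, each part of size at most p-1, of a number congruent to i mod p, is the same for all residues i mod p. -/
/-!
Partitions with `k` parts in `[1, p - 1]` are the size-`k` multisets of nonzero residues mod `p`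
(list the parts in decreasing order). Translating every element of a size-`k` multiset over
`ZMod p` by `c` shifts its sum by `k c`, so when `p ∤ k` the multisets of size `k` are
equidistributed over the value of their sum. Those containing `0` correspond, by removing one
`0`, to the multisets of size `k - 1`, which are equidistributed as well when `p ∤ k - 1`; the
difference, the multisets avoiding `0`, is therefore equidistributed too.
-/

/-- The number of partitions into exactly k parts, each of size at least 1 and at
most L, of a number congruent to i mod p. -/
def exactPartCount (k L p i : ℕ) : ℕ :=
  ((Finset.univ : Finset (Fin k → Fin (L + 1))).filter
    (fun f => (∀ a b : Fin k, a ≤ b → (f b : ℕ) ≤ (f a : ℕ)) ∧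
      (∀ a, 0 < (f a : ℕ)) ∧ (∑ a, (f a : ℕ)) % p = i)).card

open Finset

namespace Sym

variable {α : Type*} {k : ℕ}

def ofFn (f : Fin k → α) : Sym α k := ⟨List.ofFn f, by simp⟩

@[simp] theorem coe_ofFn (f : Fin k → α) : (ofFn f : Multiset α) = List.ofFn f := rfl

@[simp] theorem mem_ofFn {f : Fin k → α} {a : α} : a ∈ ofFn f ↔ a ∈ Set.range f := by
  simp [← mem_coe]

variable [LinearOrder α]

theorem ofFn_injective_of_antitone {f g : Fin k → α} (hf : Antitone f) (hg : Antitone g)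
    (h : ofFn f = ofFn g) : f = g := by
  have hperm : (List.ofFn f).Perm (List.ofFn g) := Multiset.coe_eq_coe.mp (coe_inj.mpr h)
  exact List.ofFn_inj.mp (hperm.eq_of_sortedGE hf.sortedGE_ofFn hg.sortedGE_ofFn)

theorem exists_antitone_ofFn_eq (s : Sym α k) : ∃ f : Fin k → α, Antitone f ∧ ofFn f = s := by
  let v : List.Vector α k := ⟨(s : Multiset α).sort (· ≥ ·), by simp⟩
  have hv : List.ofFn v.get = (s : Multiset α).sort (· ≥ ·) := by
    rw [← List.Vector.toList_ofFn, List.Vector.ofFn_get]; rfl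
  refine ⟨v.get, ?_, ext ?_⟩
  · rw [← List.sortedGE_ofFn_iff, hv]
    exact (Multiset.pairwise_sort _ _).sortedGE
  · rw [coe_ofFn, hv, Multiset.sort_eq]

theorem card_filter_antitone [Fintype α] (P : Sym α k → Prop) [DecidablePred P] :
    #{f : Fin k → α | Antitone f ∧ P (ofFn f)} = #{s : Sym α k | P s} := by
  apply card_bij (fun f _ => ofFn f)
  · intro f hf
    simp only [mem_filter, mem_univ, true_and] at hf ⊢
    exact hf.2
  · intro f hf g hg
    simp only [mem_filter, mem_univ, true_and] at hf hg
    exact ofFn_injective_of_antitone hf.1 hg.1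
  · intro s hs
    obtain ⟨f, hf, rfl⟩ := exists_antitone_ofFn_eq s
    simp only [mem_filter, mem_univ, true_and] at hs ⊢
    exact ⟨f, ⟨hf, hs⟩, rfl⟩

end Sym

section SymSum

variable {G : Type*} [DecidableEq G] [Fintype G]

theorem card_sym_sum_eq_card_sym_sum_add_nsmul [AddCommGroup G] (k : ℕ) (g c : G) :
    #{s : Sym G k | (s : Multiset G).sum = g} =
      #{s : Sym G k | (s : Multiset G).sum = g + k • c} := by
  refine card_equiv (Sym.equivCongr (Equiv.addRight c)) fun s => ?_
  simp [Sym.equivCongr]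

theorem card_sym_sum_eq_of_surjective_nsmul [AddCommGroup G] {k : ℕ}
    (hk : Function.Surjective fun c : G => k • c) (g h : G) :
    #{s : Sym G k | (s : Multiset G).sum = g} = #{s : Sym G k | (s : Multiset G).sum = h} := by
  obtain ⟨c, hc : k • c = h - g⟩ := hk (h - g)
  rw [card_sym_sum_eq_card_sym_sum_add_nsmul k g c, hc, add_sub_cancel]

theorem card_sym_succ_sum_eq_card_zero_notMem_add [AddCommMonoid G] (k : ℕ) (g : G) :
    #{s : Sym G (k + 1) | (s : Multiset G).sum = g} =
      #{s : Sym G (k + 1) | 0 ∉ s ∧ (s : Multiset G).sum = g} +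
        #{s : Sym G k | (s : Multiset G).sum = g} := by
  have hzero : #{s : Sym G k | (s : Multiset G).sum = g} =
      #{s : Sym G (k + 1) | 0 ∈ s ∧ (s : Multiset G).sum = g} := by
    refine card_bij' (fun t _ => 0 ::ₛ t) (fun s hs => s.erase 0 (mem_filter.mp hs).2.1)
      ?_ ?_ (fun t _ => Sym.erase_cons_head t 0) (fun s _ => Sym.cons_erase _)
    · intro t ht
      simp_all [Sym.coe_cons]
    · intro s hs
      obtain ⟨h0, hsum⟩ := (mem_filter.mp hs).2
      simp only [mem_filter, mem_univ, true_and, Sym.coe_erase]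
      rw [← hsum, ← zero_add ((s : Multiset G).erase 0).sum]
      exact Multiset.sum_erase (Sym.mem_coe.mpr h0)
  rw [hzero, ← card_union_of_disjoint]
  · congr 1
    ext s
    simp only [mem_union, mem_filter, mem_univ, true_and]
    tauto
  · rw [disjoint_filter]
    tauto

theorem card_sym_zero_notMem_sum_eq_of_surjective_nsmul [AddCommGroup G] {k : ℕ}
    (hk : Function.Surjective fun c : G => k • c)
    (hk' : Function.Surjective fun c : G => (k + 1) • c) (g h : G) :
    #{s : Sym G (k + 1) | 0 ∉ s ∧ (s : Multiset G).sum = g} =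
      #{s : Sym G (k + 1) | 0 ∉ s ∧ (s : Multiset G).sum = h} := by
  have hg := card_sym_succ_sum_eq_card_zero_notMem_add k g
  have hh := card_sym_succ_sum_eq_card_zero_notMem_add k h
  rw [card_sym_sum_eq_of_surjective_nsmul hk g h, card_sym_sum_eq_of_surjective_nsmul hk' g h] at hg
  omega

end SymSum

theorem nsmul_surjective_of_natCast_ne_zero {F : Type*} [DivisionRing F] {k : ℕ}
    (hk : (k : F) ≠ 0) : Function.Surjective fun c : F => k • c :=
  fun y => ⟨(k : F)⁻¹ * y, by simp [nsmul_eq_mul, mul_inv_cancel_left₀ hk]⟩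

theorem ZMod.natCast_ne_zero_of_pos_of_lt {p k : ℕ} (hk : 0 < k) (hkp : k < p) :
    (k : ZMod p) ≠ 0 := by
  rw [Ne, ZMod.natCast_eq_zero_iff]
  exact fun h => (Nat.le_of_dvd hk h).not_gt hkp

theorem exactPartCount_eq_card_sym_fin (k L p i : ℕ) :
    exactPartCount k L p i =
      #{s : Sym (Fin (L + 1)) k | 0 ∉ s ∧ ((s : Multiset (Fin (L + 1))).map (↑)).sum % p = i} := by
  rw [exactPartCount, ← Sym.card_filter_antitone]
  congr 1
  ext f
  simp [Antitone, Fin.pos_iff_ne_zero, List.sum_ofFn]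

theorem exactPartCount_eq_card_sym_zmod (k L i : ℕ) (hi : i < L + 1) :
    exactPartCount k L (L + 1) i =
      #{s : Sym (ZMod (L + 1)) k | 0 ∉ s ∧ (s : Multiset (ZMod (L + 1))).sum = i} := by
  let e : Fin (L + 1) ≃ ZMod (L + 1) :=
    { toFun x := (x : ℕ)
      invFun z := ⟨z.val, z.val_lt⟩
      left_inv x := Fin.ext (ZMod.val_natCast_of_lt x.isLt)
      right_inv := ZMod.natCast_zmod_val }
  rw [exactPartCount_eq_card_sym_fin]
  refine card_equiv (Sym.equivCongr e) fun s => ?_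
  have hzero : (0 : ZMod (L + 1)) ∉ s.map e ↔ 0 ∉ s := by
    have he : e.symm 0 = 0 := rfl
    simp [Sym.mem_map, ← Equiv.eq_symm_apply, he]
  have hsum : ((s.map e : Sym (ZMod (L + 1)) k) : Multiset (ZMod (L + 1))).sum =
      (((s : Multiset (Fin (L + 1))).map (↑)).sum : ℕ) := by
    simp [e, Nat.cast_multiset_sum, Multiset.map_map]
  simp only [mem_filter, mem_univ, true_and, Sym.equivCongr, Equiv.coe_fn_mk]
  rw [hzero, hsum, ZMod.natCast_eq_natCast_iff', Nat.mod_eq_of_lt hi]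

theorem exactPartCount_eq_general (p k : ℕ) (hp : p.Prime)
    (h2 : 2 ≤ k) (hk : k ≤ p - 1) (i j : ℕ) (hi : i < p) (hj : j < p) :
    exactPartCount k (p - 1) p i = exactPartCount k (p - 1) p j := by
  obtain ⟨m, rfl⟩ : ∃ m, k = m + 1 := ⟨k - 1, by omega⟩
  have : Fact p.Prime := ⟨hp⟩
  have hsurj : ∀ n, 0 < n → n < p → Function.Surjective fun c : ZMod p => n • c :=
    fun n hn hnp => nsmul_surjective_of_natCast_ne_zero (ZMod.natCast_ne_zero_of_pos_of_lt hn hnp)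
  obtain ⟨L, rfl⟩ : ∃ L, p = L + 1 := ⟨p - 1, by omega⟩
  rw [Nat.add_sub_cancel, exactPartCount_eq_card_sym_zmod _ _ _ hi,
    exactPartCount_eq_card_sym_zmod _ _ _ hj]
  exact card_sym_zero_notMem_sum_eq_of_surjective_nsmul (hsurj m (by omega) (by omega))
    (hsurj (m + 1) (by omega) (by omega)) _ _

/-- For an odd prime p and 2 ≤ k ≤ p-1, the partitions into exactly k parts each
at most p-1 are equidistributed over residues of their size mod p. -/
theorem exactPartCount_eq (p k : ℕ) (hp : p.Prime) (hodd : Odd p)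
    (h2 : 2 ≤ k) (hk : k ≤ p - 1) (i j : ℕ) (hi : i < p) (hj : j < p) :
    exactPartCount k (p - 1) p i = exactPartCount k (p - 1) p j :=
  exactPartCount_eq_general p k hp h2 hk i j hi hj
end

section
/- For an odd prime p, any M ≥ 1, and any k with 1 ≤ k ≤ p-1, the number of partitions into exactly k parts each of size at most Mp of a number congruent to i mod p is the same for all residues i mod p. -/
open Finset

section SortedTuples

variable {α : Type*} [LinearOrder α]

theorem List.ofFn_injOn_antitone {k : ℕ} :
    Set.InjOn (fun f : Fin k → α => (List.ofFn f : Multiset α)) {f | Antitone f} := by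
  intro f hf g hg hfg
  exact List.ofFn_inj.1 <| (Multiset.coe_eq_coe.1 hfg).eq_of_sortedGE
    (List.sortedGE_ofFn_iff.2 hf) (List.sortedGE_ofFn_iff.2 hg)

theorem Multiset.exists_antitone_ofFn_eq {k : ℕ} (m : Multiset α) (hm : Multiset.card m = k) :
    ∃ f : Fin k → α, Antitone f ∧ (List.ofFn f : Multiset α) = m := by
  subst hm
  set l := m.sort (· ≥ ·)
  have hl : l.length = Multiset.card m := Multiset.length_sort _
  refine ⟨fun a => l.get (a.cast hl.symm), ?_, ?_⟩
  · have hsorted : l.SortedGE := List.sortedGE_iff_pairwise.2 (Multiset.pairwise_sort m _)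
    exact fun a b hab => hsorted.antitone_get hab
  · rw [← List.ofFn_congr hl l.get, List.ofFn_get, Multiset.sort_eq]

variable [Fintype α] [DecidableEq α]

theorem card_antitone_filter_eq_card_sym (k : ℕ) (P : Multiset α → Prop) [DecidablePred P] :
    #{f : Fin k → α | Antitone f ∧ P (List.ofFn f)} = #{s : Sym α k | P s} := by
  refine card_bij (fun f _ => ⟨List.ofFn f, by simp⟩) (fun f hf => ?_) (fun f hf g hg hfg => ?_) ?_
  · exact mem_filter.2 ⟨mem_univ _, (mem_filter.1 hf).2.2⟩
  · exact List.ofFn_injOn_antitone (mem_filter.1 hf).2.1 (mem_filter.1 hg).2.1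
      (congrArg Subtype.val hfg)
  · intro s hs
    obtain ⟨f, hf, hfs⟩ := Multiset.exists_antitone_ofFn_eq (s : Multiset α) s.2
    exact ⟨f, mem_filter.2 ⟨mem_univ _, hf, hfs ▸ (mem_filter.1 hs).2⟩, Sym.coe_injective hfs⟩

end SortedTuples

theorem exactPartCount_eq_card_antitone (k L p i : ℕ) :
    exactPartCount k L p i =
      #{g : Fin k → Fin L | Antitone g ∧ (∑ a, ((g a : ℕ) + 1)) % p = i} := by
  symm
  refine card_bij (fun g _ => Fin.succ ∘ g) (fun g hg => ?_) (fun g _ h _ hgh => ?_) ?_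
  · obtain ⟨hanti, hsum⟩ := (mem_filter.1 hg).2
    refine mem_filter.2 ⟨mem_univ _, fun a b hab => ?_, fun a => Fin.succ_pos _, ?_⟩
    · simpa using hanti hab
    · simpa using hsum
  · exact funext fun a => Fin.succ_injective _ (congrFun hgh a)
  · intro f hf
    obtain ⟨hanti, hpos, hsum⟩ := (mem_filter.1 hf).2
    have hne : ∀ a, f a ≠ 0 := fun a => Fin.pos_iff_ne_zero.1 (hpos a)
    refine ⟨fun a => (f a).pred (hne a), mem_filter.2 ⟨mem_univ _, fun a b hab => ?_, ?_⟩, ?_⟩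
    · simpa [Fin.pred_le_pred_iff] using hanti a b hab
    · convert hsum using 3 with a
      have := hpos a
      simp only [Fin.val_pred]
      omega
    · exact funext fun a => Fin.succ_pred _ _

section Shift

variable {α G : Type*} [Fintype α] [DecidableEq α] [AddCancelCommMonoid G] [DecidableEq G]

theorem card_sym_sum_map_eq_add_nsmul (e : α ≃ α) (w : α → G) (c : G)
    (hw : ∀ x, w (e x) = w x + c) (k : ℕ) (g : G) :
    #{s : Sym α k | ((s : Multiset α).map w).sum = g} =
      #{s : Sym α k | ((s : Multiset α).map w).sum = g + k • c} := by
  refine card_equiv (Sym.equivCongr e) fun s => ?_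
  have : (((s.map e : Sym α k) : Multiset α).map w).sum = ((s : Multiset α).map w).sum + k • c := by
    simp [Sym.coe_map, Multiset.map_map, hw, Multiset.sum_map_add]
  simp only [mem_filter, mem_univ, true_and, Sym.equivCongr_apply, this, add_left_inj]

end Shift

theorem Fin.natCast_val_add_of_dvd {L p : ℕ} [NeZero L] (h : p ∣ L) (x y : Fin L) :
    (((x + y : Fin L) : ℕ) : ZMod p) = (x : ℕ) + (y : ℕ) := by
  rw [Fin.val_add, ← Nat.cast_add, ZMod.natCast_eq_natCast_iff', Nat.mod_mod_of_dvd _ h]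

theorem exactPartCount_eq_card_sym {k L p i : ℕ} (hi : i < p) :
    exactPartCount k L p i =
      #{s : Sym (Fin L) k |
        ((s : Multiset (Fin L)).map fun x : Fin L => ((x : ℕ) + 1 : ZMod p)).sum = i} := by
  rw [exactPartCount_eq_card_antitone,
    ← card_antitone_filter_eq_card_sym k
      fun m : Multiset (Fin L) => (m.map fun x : Fin L => ((x : ℕ) + 1 : ZMod p)).sum = i]
  refine congrArg card (filter_congr fun g _ => and_congr_right fun _ => ?_)
  rw [Multiset.map_coe, Multiset.sum_coe, List.map_ofFn, List.sum_ofFn,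
    ← Nat.mod_eq_of_lt hi, ← ZMod.natCast_eq_natCast_iff', ZMod.natCast_mod]
  push_cast
  rfl

theorem exactPartCount_Mp_eq_general (p M k : ℕ) (hp : p.Prime)
    (hM : 1 ≤ M) (h1 : 1 ≤ k) (hk : k ≤ p - 1) (i j : ℕ) (hi : i < p) (hj : j < p) :
    exactPartCount k (M * p) p i = exactPartCount k (M * p) p j := by
  have : Fact p.Prime := ⟨hp⟩
  have : NeZero (M * p) := ⟨(Nat.mul_pos hM hp.pos).ne'⟩
  have hk0 : (k : ZMod p) ≠ 0 := by
    rw [Ne, ZMod.natCast_eq_zero_iff]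
    exact fun hdvd => absurd (Nat.le_of_dvd h1 hdvd) (by omega)
  obtain ⟨c, hji⟩ : ∃ c : ZMod p, (j : ZMod p) = i + k • c :=
    ⟨(j - i) / k, by rw [nsmul_eq_mul, mul_div_cancel₀ _ hk0]; ring⟩
  let t : Fin (M * p) := ⟨c.val, c.val_lt.trans_le (Nat.le_mul_of_pos_left p hM)⟩
  have ht : ((t : ℕ) : ZMod p) = c := ZMod.natCast_zmod_val c
  rw [exactPartCount_eq_card_sym hi, exactPartCount_eq_card_sym hj, hji, ← ht]
  refine card_sym_sum_map_eq_add_nsmul (Equiv.addRight t) _ _ (fun x => ?_) k _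
  rw [Equiv.coe_addRight, Fin.natCast_val_add_of_dvd (dvd_mul_left p M)]
  ring

/-- For an odd prime p, M ≥ 1 and 1 ≤ k ≤ p-1, the partitions into exactly k
parts each at most Mp are equidistributed over residues of their size mod p. -/
theorem exactPartCount_Mp_eq (p M k : ℕ) (hp : p.Prime) (hodd : Odd p)
    (hM : 1 ≤ M) (h1 : 1 ≤ k) (hk : k ≤ p - 1) (i j : ℕ) (hi : i < p) (hj : j < p) :
    exactPartCount k (M * p) p i = exactPartCount k (M * p) p j :=
  exactPartCount_Mp_eq_general p M k hp hM h1 hk i j hi hj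
end

section
/- For an odd prime p, natural numbers M ≥ 1 and 1 ≤ N ≤ p-1: the sum Σ_{k=0}^{MN} p(Mp, N, kp) equals (1/p)·[C(Mp+N, N) − 1] + 1. -/
/-!
A partition in the `N × M` box is an antitone tuple `f : Fin N → Fin (M + 1)`; its generating
function by size is the Gaussian binomial coefficient `G_{M,N}(z) = [M + N, N]_z`. Splitting on
whether the largest part equals `M`, respectively on whether all `N` parts are positive, gives two
Pascal-type recurrences, and their difference yields
`G_{M,N}(z) ∏_{i ≤ N} (1 - z^i) = ∏_{i ≤ N} (1 - z^(M + i))`.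
For `N < p` the product on the left does not vanish at a primitive `p`-th root of unity `ω`, so
`G_{Mp,N}(ω^j) = 1` for `0 < j < p`, while `G_{Mp,N}(1) = C(Mp + N, N)`. Summing `G_{Mp,N}` over
all `p`-th roots of unity counts `p` times the partitions whose size is divisible by `p`:
`p · #{p ∣ size} = C(Mp + N, N) + (p - 1)`.
-/

open Finset

namespace Fin

variable {α : Type*} [Preorder α] {n : ℕ}

theorem antitone_cons_iff {a : α} {g : Fin n → α} :
    Antitone (cons a g : Fin (n + 1) → α) ↔ (∀ i, g i ≤ a) ∧ Antitone g := by
  simpa only [antitone_iff_forall_lt, Relator.LiftFun, ge_iff_le]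
    using liftFun_cons (α := α) (· ≥ ·) (f := g) (a := a)

theorem antitone_snoc_iff {a : α} {g : Fin n → α} :
    Antitone (snoc g a : Fin (n + 1) → α) ↔ (∀ i, a ≤ g i) ∧ Antitone g := by
  refine ⟨fun h => ⟨fun i => ?_, fun i j hij => ?_⟩, fun ⟨ha, hg⟩ i j hij => ?_⟩
  · simpa using h (le_last i.castSucc)
  · simpa using h (castSucc_le_castSucc_iff.2 hij)
  · induction j using lastCases with
    | last => induction i using lastCases with
      | last => rfl
      | cast i => simpa using ha i
    | cast j =>
      obtain ⟨i, rfl⟩ :=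
        exists_castSucc_eq.2 (ne_last_of_lt (hij.trans_lt (castSucc_lt_last j)))
      simpa using hg (castSucc_le_castSucc_iff.1 hij)

end Fin

namespace IsPrimitiveRoot

variable {R : Type*} [CommRing R] [IsDomain R] {ω : R} {k : ℕ}

theorem sum_pow_pow_eq (hω : IsPrimitiveRoot ω k) (n : ℕ) :
    ∑ j ∈ range k, (ω ^ j) ^ n = if k ∣ n then (k : R) else 0 := by
  simp_rw [← pow_mul, mul_comm _ n, pow_mul]
  split_ifs with hkn
  · simp [(hω.pow_eq_one_iff_dvd n).2 hkn]
  · have hne : ω ^ n - 1 ≠ 0 := sub_ne_zero.2 fun h => hkn ((hω.pow_eq_one_iff_dvd n).1 h)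
    have hgeom := geom_sum_mul (ω ^ n) k
    rw [pow_right_comm, hω.pow_eq_one, one_pow, sub_self] at hgeom
    exact (mul_eq_zero.1 hgeom).resolve_right hne

theorem sum_sum_pow_eq_mul_card_filter_dvd {ι : Type*} (hω : IsPrimitiveRoot ω k)
    (s : Finset ι) (w : ι → ℕ) :
    ∑ j ∈ range k, ∑ i ∈ s, (ω ^ j) ^ w i = k * #{i ∈ s | k ∣ w i} := by
  rw [sum_comm]
  simp [hω.sum_pow_pow_eq, sum_ite, mul_comm]

end IsPrimitiveRoot

theorem Finset.card_filter_dvd_eq_sum_card_filter {ι : Type*} (s : Finset ι) (w : ι → ℕ)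
    {k K : ℕ} (hk : 0 < k) (hw : ∀ i ∈ s, w i ≤ K * k) :
    #{i ∈ s | k ∣ w i} = ∑ m ∈ range (K + 1), #{i ∈ s | w i = m * k} := by
  rw [card_eq_sum_card_fiberwise (f := fun i => w i / k) (t := range (K + 1))]
  · refine sum_congr rfl fun m _ => ?_
    rw [filter_filter]
    refine congrArg card (filter_congr fun i _ => ⟨?_, fun h => ?_⟩)
    · rintro ⟨hdvd, rfl⟩
      exact (Nat.div_mul_cancel hdvd).symm
    · exact ⟨⟨m, h.trans (mul_comm m k)⟩, by rw [h, Nat.mul_div_cancel _ hk]⟩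
  · intro i hi
    rw [coe_range, Set.mem_Iio, Nat.lt_succ_iff]
    exact Nat.div_le_of_le_mul (by rw [mul_comm]; exact hw i (mem_filter.1 hi).1)

namespace RestrictedPartitions

def box (M N : ℕ) : Finset (Fin N → Fin (M + 1)) := {f | Antitone f}

def size {M N : ℕ} (f : Fin N → Fin (M + 1)) : ℕ := ∑ i, (f i : ℕ)

@[simp]
theorem mem_box {M N : ℕ} {f : Fin N → Fin (M + 1)} : f ∈ box M N ↔ Antitone f := by
  simp [box]

theorem _root_.restrictedPartitions_eq_card_filter (M N n : ℕ) :
    restrictedPartitions M N n = #{f ∈ box M N | size f = n} := by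
  unfold restrictedPartitions box size
  rw [filter_filter]
  rfl

theorem size_le_mul {M N : ℕ} (f : Fin N → Fin (M + 1)) : size f ≤ N * M := by
  simpa [size] using sum_le_card_nsmul univ (fun i => (f i : ℕ)) M fun i _ => Fin.is_le (f i)

section Semiring

variable {A : Type*} [CommSemiring A] (z : A)

/-- The Gaussian binomial coefficient `[M + N, N]` evaluated at `z`. -/
def gaussBinom (M N : ℕ) : A := ∑ f ∈ box M N, z ^ size f

theorem gaussBinom_zero_right (M : ℕ) : gaussBinom z M 0 = 1 := by
  simp [gaussBinom, box, size, Subsingleton.antitone]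

theorem gaussBinom_zero_left (N : ℕ) : gaussBinom z 0 N = 1 := by
  simp [gaussBinom, box, size, filter_singleton, antitone_const]

theorem sum_box_head_eq_last (M N : ℕ) :
    ∑ f ∈ box M (N + 1) with f 0 = Fin.last M, z ^ size f = z ^ M * gaussBinom z M N := by
  rw [gaussBinom, mul_sum]
  refine sum_nbij' Fin.tail
    (fun g => (Fin.cons (Fin.last M) g : Fin (N + 1) → Fin (M + 1))) ?_ ?_ ?_ ?_ ?_
  · intro f hf
    rw [mem_filter, mem_box, ← Fin.cons_self_tail f, Fin.antitone_cons_iff] at hf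
    exact mem_box.2 hf.1.2
  · intro g hg
    simp only [mem_filter, mem_box, Fin.antitone_cons_iff, Fin.cons_zero, and_true]
    exact ⟨fun _ => Fin.le_last _, mem_box.1 hg⟩
  · intro f hf
    rw [← (mem_filter.1 hf).2, Fin.cons_self_tail]
  · intro g _
    exact Fin.tail_cons _ _
  · intro f hf
    rw [size, Fin.sum_univ_succ, (mem_filter.1 hf).2, Fin.val_last, pow_add]
    rfl

theorem sum_box_last_eq_zero (M N : ℕ) :
    ∑ f ∈ box M (N + 1) with f (Fin.last N) = 0, z ^ size f = gaussBinom z M N := by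
  refine sum_nbij' Fin.init
    (fun g => (Fin.snoc g 0 : Fin (N + 1) → Fin (M + 1))) ?_ ?_ ?_ ?_ ?_
  · intro f hf
    rw [mem_filter, mem_box, ← Fin.snoc_init_self f, Fin.antitone_snoc_iff] at hf
    exact mem_box.2 hf.1.2
  · intro g hg
    simp only [mem_filter, mem_box, Fin.antitone_snoc_iff, Fin.snoc_last, and_true]
    exact ⟨fun _ => Fin.zero_le _, mem_box.1 hg⟩
  · intro f hf
    rw [← (mem_filter.1 hf).2, Fin.snoc_init_self]
  · intro g _
    exact Fin.init_snoc _ _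
  · intro f hf
    rw [size, Fin.sum_univ_castSucc, (mem_filter.1 hf).2, Fin.val_zero, add_zero]
    rfl

theorem sum_box_head_ne_last (M N : ℕ) :
    ∑ f ∈ box (M + 1) (N + 1) with f 0 ≠ Fin.last (M + 1), z ^ size f
      = gaussBinom z M (N + 1) := by
  symm
  refine sum_nbij (fun g => Fin.castSucc ∘ g) ?_ ?_ ?_ ?_
  · intro g hg
    simp only [mem_filter, mem_box, Function.comp_apply] at hg ⊢
    exact ⟨Fin.strictMono_castSucc.monotone.comp_antitone hg, Fin.castSucc_ne_last _⟩
  · exact (Fin.castSucc_injective _).comp_left.injOn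
  · intro f hf
    rw [mem_coe, mem_filter, mem_box] at hf
    have hne (k : Fin (N + 1)) : f k ≠ Fin.last (M + 1) :=
      Fin.ne_last_of_lt ((hf.1 (Fin.zero_le k)).trans_lt (Fin.lt_last_iff_ne_last.2 hf.2))
    refine ⟨fun k => (f k).castPred (hne k), ?_, funext fun k => Fin.castSucc_castPred _ _⟩
    exact mem_box.2 fun i j hij => Fin.castPred_le_castPred_iff.2 (hf.1 hij)
  · intro g _
    simp [size]

theorem sum_box_last_ne_zero (M N : ℕ) :
    ∑ f ∈ box (M + 1) (N + 1) with f (Fin.last N) ≠ 0, z ^ size f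
      = z ^ (N + 1) * gaussBinom z M (N + 1) := by
  rw [gaussBinom, mul_sum]
  symm
  refine sum_nbij (fun g => Fin.succ ∘ g) ?_ ?_ ?_ ?_
  · intro g hg
    simp only [mem_filter, mem_box, Function.comp_apply] at hg ⊢
    exact ⟨Fin.strictMono_succ.monotone.comp_antitone hg, Fin.succ_ne_zero _⟩
  · exact (Fin.succ_injective _).comp_left.injOn
  · intro f hf
    rw [mem_coe, mem_filter, mem_box] at hf
    have hne (k : Fin (N + 1)) : f k ≠ 0 :=
      Fin.ne_zero_of_lt ((Fin.pos_iff_ne_zero.2 hf.2).trans_le (hf.1 (Fin.le_last k)))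
    refine ⟨fun k => (f k).pred (hne k), ?_, funext fun k => Fin.succ_pred _ _⟩
    exact mem_box.2 fun i j hij => Fin.pred_le_pred_iff.2 (hf.1 hij)
  · intro g _
    simp [size, Fin.val_succ, sum_add_distrib, pow_add, mul_comm]

theorem gaussBinom_succ_succ (M N : ℕ) :
    gaussBinom z (M + 1) (N + 1)
      = gaussBinom z M (N + 1) + z ^ (M + 1) * gaussBinom z (M + 1) N := by
  rw [gaussBinom, ← sum_filter_not_add_sum_filter _ (fun f => f 0 = Fin.last (M + 1)),
    sum_box_head_ne_last, sum_box_head_eq_last]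

theorem gaussBinom_succ_succ' (M N : ℕ) :
    gaussBinom z (M + 1) (N + 1)
      = gaussBinom z (M + 1) N + z ^ (N + 1) * gaussBinom z M (N + 1) := by
  rw [gaussBinom, ← sum_filter_add_sum_filter_not _ (fun f => f (Fin.last N) = 0),
    sum_box_last_eq_zero, sum_box_last_ne_zero]

theorem gaussBinom_one (M N : ℕ) : gaussBinom (1 : A) M N = (M + N).choose N := by
  induction M generalizing N with
  | zero => simp [gaussBinom_zero_left]
  | succ M ihM =>
    induction N with
    | zero => simp [gaussBinom_zero_right]
    | succ N ihN =>
      rw [gaussBinom_succ_succ, ihM, ihN, one_pow, one_mul,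
        show M + 1 + (N + 1) = M + 1 + N + 1 by ring, Nat.choose_succ_succ, Nat.cast_add,
        add_comm, show M + (N + 1) = M + 1 + N by ring]

end Semiring

section Ring

variable {A : Type*} [CommRing A]

theorem gaussBinom_mul_prod (z : A) (M N : ℕ) :
    gaussBinom z M N * ∏ i ∈ range N, (1 - z ^ (i + 1))
      = ∏ i ∈ range N, (1 - z ^ (M + i + 1)) := by
  induction N generalizing M with
  | zero => simp [gaussBinom_zero_right]
  | succ N ih =>
    have key : (1 - z ^ (N + 1)) * gaussBinom z M (N + 1)
        = (1 - z ^ (M + 1)) * gaussBinom z (M + 1) N := by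
      linear_combination gaussBinom_succ_succ' z M N - gaussBinom_succ_succ z M N
    calc gaussBinom z M (N + 1) * ∏ i ∈ range (N + 1), (1 - z ^ (i + 1))
        = (1 - z ^ (M + 1))
            * (gaussBinom z (M + 1) N * ∏ i ∈ range N, (1 - z ^ (i + 1))) := by
          rw [prod_range_succ]
          linear_combination (∏ i ∈ range N, (1 - z ^ (i + 1))) * key
      _ = ∏ i ∈ range (N + 1), (1 - z ^ (M + i + 1)) := by
          rw [ih, prod_range_succ', mul_comm]
          congr 1
          exact prod_congr rfl fun i _ => by ring_nf

theorem gaussBinom_eq_one_of_isPrimitiveRoot [IsDomain A] {ω : A} {k : ℕ}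
    (hω : IsPrimitiveRoot ω k) (M : ℕ) {N : ℕ} (hN : N < k) :
    gaussBinom ω (M * k) N = 1 := by
  have hprod : ∏ i ∈ range N, (1 - ω ^ (i + 1)) ≠ 0 :=
    prod_ne_zero_iff.2 fun i hi => sub_ne_zero.2 fun h =>
      hω.pow_ne_one_of_pos_of_lt i.succ_ne_zero (by rw [mem_range] at hi; omega) h.symm
  rw [← mul_eq_right₀ hprod, gaussBinom_mul_prod]
  refine prod_congr rfl fun i _ => ?_
  rw [add_assoc, pow_add, pow_mul', hω.pow_eq_one, one_pow, one_mul]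

end Ring

theorem prime_mul_card_filter_dvd_size {p : ℕ} (hp : p.Prime) (M : ℕ) {N : ℕ} (hN : N < p) :
    p * #{f ∈ box (M * p) N | p ∣ size f} = (M * p + N).choose N + (p - 1) := by
  obtain ⟨ω, hω⟩ : ∃ ω : ℂ, IsPrimitiveRoot ω p :=
    ⟨_, Complex.isPrimitiveRoot_exp p hp.ne_zero⟩
  have hprim (j : ℕ) (hj : j ∈ Ico 1 p) : gaussBinom (ω ^ j) (M * p) N = 1 := by
    rw [mem_Ico] at hj
    refine gaussBinom_eq_one_of_isPrimitiveRoot (hω.pow_of_coprime j ?_) M hN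
    exact (Nat.coprime_of_lt_prime (by omega) hj.2 hp).symm
  suffices (p : ℂ) * #{f ∈ box (M * p) N | p ∣ size f}
      = (M * p + N).choose N + (p - 1 : ℕ) by
    exact_mod_cast this
  rw [← hω.sum_sum_pow_eq_mul_card_filter_dvd, range_eq_Ico, sum_eq_sum_Ico_succ_bot hp.pos]
  change gaussBinom (ω ^ 0) (M * p) N + ∑ j ∈ Ico 1 p, gaussBinom (ω ^ j) (M * p) N = _
  simp [sum_congr rfl hprim, gaussBinom_one]

end RestrictedPartitions

open RestrictedPartitions in
theorem sum_restrictedPartitions_zero_residue_general (p M N : ℕ)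
    (hp : p.Prime) (hN : N ≤ p - 1) :
    p * ∑ k ∈ Finset.range (M * N + 1), restrictedPartitions (M * p) N (k * p)
      = ((M * p + N).choose N - 1) + p := by
  have hcount : ∑ k ∈ range (M * N + 1), restrictedPartitions (M * p) N (k * p)
      = #{f ∈ box (M * p) N | p ∣ size f} := by
    simp_rw [restrictedPartitions_eq_card_filter]
    exact (card_filter_dvd_eq_sum_card_filter _ _ hp.pos fun f _ =>
      (size_le_mul f).trans_eq (by ring)).symm
  have hp2 := hp.two_le
  have hchoose := Nat.choose_pos (Nat.le_add_left N (M * p))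
  rw [hcount, prime_mul_card_filter_dvd_size hp M (by omega)]
  omega

/-- For an odd prime p, M ≥ 1, 1 ≤ N ≤ p-1:
∑_{k=0}^{MN} p(Mp, N, kp) = (C(Mp+N, N) − 1)/p + 1. -/
theorem sum_restrictedPartitions_zero_residue (p M N : ℕ)
    (hp : p.Prime) (hodd : Odd p) (hM : 1 ≤ M) (hN1 : 1 ≤ N) (hN : N ≤ p - 1) :
    p * ∑ k ∈ Finset.range (M * N + 1), restrictedPartitions (M * p) N (k * p)
      = ((M * p + N).choose N - 1) + p :=
  sum_restrictedPartitions_zero_residue_general p M N hp hN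
end

section
/- For an odd prime p, any N with 1 ≤ N ≤ p-1, and any residue j mod p: the sum over m ≡ j (mod p) of p(p-1, N, m) equals (1/p)·C(p-1+N, N). -/
/-!
A partition with at most `N` parts of size at most `p - 1` is an antitone tuple `Fin N → Fin p`,
i.e. a multiset of `N` residues mod `p`, and the congruence class of the partitioned number is the
sum of that multiset in `ZMod p`. Translating a multiset by `c` shifts its sum by `N • c`; since
`N` is a unit mod `p`, every residue is the sum of equally many multisets, so each class receives
a `1/p` share of all `(p - 1 + N).choose N` multisets (stars and bars).
-/

open Finset

section AntitoneTuples

variable {α : Type*} [LinearOrder α] {N : ℕ}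

theorem Antitone.eq_of_map_univ_val_eq {f g : Fin N → α} (hf : Antitone f) (hg : Antitone g)
    (h : univ.val.map f = univ.val.map g) : f = g := by
  rw [Fin.univ_val_map, Fin.univ_val_map, Multiset.coe_eq_coe] at h
  exact List.ofFn_injective (h.eq_of_sortedGE hf.sortedGE_ofFn hg.sortedGE_ofFn)

theorem Multiset.exists_antitone_map_univ_val_eq (s : Multiset α) (hs : Multiset.card s = N) :
    ∃ f : Fin N → α, Antitone f ∧ univ.val.map f = s := by
  set l := s.sort (· ≥ ·)
  have hl : l.length = N := by rw [Multiset.length_sort, hs]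
  subst hl
  refine ⟨l.get, (Multiset.pairwise_sort s _).sortedGE.antitone_get, ?_⟩
  rw [Fin.univ_val_map, List.ofFn_get, Multiset.sort_eq]

theorem card_filter_antitone_eq_card_filter_sym [Fintype α] (P : Multiset α → Prop)
    [DecidablePred P] :
    #{f : Fin N → α | Antitone f ∧ P (univ.val.map f)} = #{s : Sym α N | P s} := by
  refine card_bij (fun f _ => ⟨univ.val.map f, by simp⟩) ?_ ?_ ?_
  · intro f hf
    exact mem_filter.mpr ⟨mem_univ _, (mem_filter.mp hf).2.2⟩
  · intro f hf g hg hfg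
    exact (mem_filter.mp hf).2.1.eq_of_map_univ_val_eq (mem_filter.mp hg).2.1
      (congrArg Subtype.val hfg)
  · intro s hs
    obtain ⟨f, hf, hfs⟩ := (s : Multiset α).exists_antitone_map_univ_val_eq s.2
    exact ⟨f, mem_filter.mpr ⟨mem_univ _, hf, hfs ▸ (mem_filter.mp hs).2⟩,
      Sym.coe_injective hfs⟩

end AntitoneTuples

theorem Sym.sum_map_add_const {G : Type*} [AddCommMonoid G] {N : ℕ} (s : Sym G N) (c : G) :
    ((s.map (· + c) : Sym G N) : Multiset G).sum = (s : Multiset G).sum + N • c := by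
  rw [Sym.coe_map, Multiset.sum_map_add, Multiset.map_id', Multiset.map_const',
    Multiset.sum_replicate, Sym.card_coe]

section SymSum

variable {G : Type*} [AddCommGroup G] [Fintype G] [DecidableEq G] {N : ℕ}

theorem card_filter_sym_sum_eq_of_surjective (hN : Function.Surjective (fun c : G => N • c))
    (t t' : G) :
    #{s : Sym G N | (s : Multiset G).sum = t} = #{s : Sym G N | (s : Multiset G).sum = t'} := by
  obtain ⟨c, hc⟩ : ∃ c : G, N • c = t' - t := hN (t' - t)
  refine card_nbij' (Sym.map (· + c)) (Sym.map (· + -c)) ?_ ?_ ?_ ?_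
  · intro s hs
    simp only [coe_filter, mem_univ, true_and, Set.mem_ofPred_eq] at hs ⊢
    rw [Sym.sum_map_add_const, hs, hc, add_sub_cancel]
  · intro s hs
    simp only [coe_filter, mem_univ, true_and, Set.mem_ofPred_eq] at hs ⊢
    rw [Sym.sum_map_add_const, hs, smul_neg, hc, neg_sub, add_sub_cancel]
  all_goals intro s _; simp [Sym.map_map]

theorem card_mul_card_filter_sym_sum_eq_choose (hN : Function.Surjective (fun c : G => N • c))
    (t : G) :
    Fintype.card G * #{s : Sym G N | (s : Multiset G).sum = t}
      = (Fintype.card G + N - 1).choose N := by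
  calc Fintype.card G * #{s : Sym G N | (s : Multiset G).sum = t}
      = ∑ t' : G, #{s : Sym G N | (s : Multiset G).sum = t'} := by
        simp [card_filter_sym_sum_eq_of_surjective hN _ t]
    _ = Fintype.card (Sym G N) :=
        (card_eq_sum_card_fiberwise fun _ _ => mem_univ _).symm
    _ = (Fintype.card G + N - 1).choose N := Sym.card_sym_eq_choose N

end SymSum

theorem sum_restrictedPartitions_filter (M N : ℕ) (Q : ℕ → Prop) [DecidablePred Q] :
    ∑ m ∈ (range (M * N + 1)).filter Q, restrictedPartitions M N m
      = #{f : Fin N → Fin (M + 1) | Antitone f ∧ Q (∑ i, (f i : ℕ))} := by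
  rw [card_eq_sum_card_fiberwise (f := fun f => ∑ i, (f i : ℕ))
    (t := (range (M * N + 1)).filter Q)]
  · refine sum_congr rfl fun m hm => ?_
    rw [restrictedPartitions, filter_filter]
    refine congrArg card (filter_congr fun f _ => ?_)
    constructor
    · rintro ⟨hf, rfl⟩
      exact ⟨⟨hf, (mem_filter.mp hm).2⟩, rfl⟩
    · rintro ⟨⟨hf, -⟩, hm⟩
      exact ⟨hf, hm⟩
  · intro f hf
    rw [mem_coe, mem_filter] at hf
    refine mem_filter.mpr ⟨mem_range_succ_iff.mpr ?_, hf.2.2⟩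
    calc ∑ i, (f i : ℕ) ≤ ∑ _i : Fin N, M := sum_le_sum fun i _ => Fin.is_le _
      _ = M * N := by simp [mul_comm]

def finEquivZMod (n : ℕ) [NeZero n] : Fin n ≃ ZMod n where
  toFun x := (x : ℕ)
  invFun z := ⟨z.val, z.val_lt⟩
  left_inv x := Fin.ext (ZMod.val_cast_of_lt x.2)
  right_inv := ZMod.natCast_zmod_val

theorem card_filter_antitone_sum_mod_eq (n N j : ℕ) [NeZero n] (hj : j < n) :
    #{f : Fin N → Fin n | Antitone f ∧ (∑ i, (f i : ℕ)) % n = j}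
      = #{s : Sym (ZMod n) N | (s : Multiset (ZMod n)).sum = j} := by
  have hsum (f : Fin N → Fin n) :
      (∑ i, (f i : ℕ)) % n = j ↔ ((univ.val.map f).map (finEquivZMod n)).sum = j := by
    have hcast : ((univ.val.map f).map (finEquivZMod n)).sum
        = ((∑ i, (f i : ℕ) : ℕ) : ZMod n) := by
      rw [Multiset.map_map, ← sum_eq_multiset_sum, Nat.cast_sum]
      rfl
    rw [hcast, ZMod.natCast_eq_natCast_iff', Nat.mod_eq_of_lt hj]
  calc _ = #{f : Fin N → Fin n |
          Antitone f ∧ ((univ.val.map f).map (finEquivZMod n)).sum = j} := by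
        simp only [hsum]
    _ = #{s : Sym (Fin n) N | ((s : Multiset (Fin n)).map (finEquivZMod n)).sum = j} :=
        card_filter_antitone_eq_card_filter_sym (fun s => (s.map (finEquivZMod n)).sum = j)
    _ = _ := card_equiv (Sym.equivCongr (finEquivZMod n)) fun s => by simp [Sym.equivCongr]

theorem ZMod.nsmul_surjective_of_coprime {n N : ℕ} (h : N.Coprime n) :
    Function.Surjective (fun c : ZMod n => N • c) := by
  intro x
  refine ⟨((ZMod.unitOfCoprime N h)⁻¹ : (ZMod n)ˣ) * x, ?_⟩
  have hu : (N : ZMod n) * ((ZMod.unitOfCoprime N h)⁻¹ : (ZMod n)ˣ) = 1 := by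
    rw [← ZMod.coe_unitOfCoprime N h, Units.mul_inv]
  simp only [nsmul_eq_mul, ← mul_assoc, hu, one_mul]

theorem sum_restrictedPartitions_p_sub_one_general (p N j : ℕ)
    (hp : p.Prime) (hN1 : 1 ≤ N) (hN : N ≤ p - 1) (hj : j < p) :
    p * ∑ m ∈ (Finset.range ((p - 1) * N + 1)).filter (fun m => m % p = j),
        restrictedPartitions (p - 1) N m
      = (p - 1 + N).choose N := by
  have : NeZero p := ⟨hp.ne_zero⟩
  have hcop : N.Coprime p :=
    Nat.coprime_comm.mp (hp.coprime_iff_not_dvd.mpr (Nat.not_dvd_of_pos_of_lt hN1 (by omega)))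
  have hcount := card_mul_card_filter_sym_sum_eq_choose
    (ZMod.nsmul_surjective_of_coprime hcop) (j : ZMod p)
  rw [ZMod.card, ← card_filter_antitone_sum_mod_eq p N j hj] at hcount
  rw [sum_restrictedPartitions_filter, Nat.sub_add_cancel hp.one_le, hcount,
    Nat.sub_add_comm hp.one_le]

/-- For an odd prime p, 1 ≤ N ≤ p-1 and any residue j mod p:
∑_{m ≡ j mod p} p(p-1, N, m) = C(p-1+N, N)/p. -/
theorem sum_restrictedPartitions_p_sub_one (p N j : ℕ)
    (hp : p.Prime) (hodd : Odd p) (hN1 : 1 ≤ N) (hN : N ≤ p - 1) (hj : j < p) :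
    p * ∑ m ∈ (Finset.range ((p - 1) * N + 1)).filter (fun m => m % p = j),
        restrictedPartitions (p - 1) N m
      = (p - 1 + N).choose N :=
  sum_restrictedPartitions_p_sub_one_general p N j hp hN1 hN hj
end

section
/- If gcd(N, r) = 1, then all fibers Δ_{N,r,s} of the center-of-mass fibration have the same cardinality: for each s mod r, the number of tuples (t₁,...,t_r) of positive integers with t₁+...+t_r = N and Σ_β β·t_β ≡ −s (mod r) equals (1/r)·C(N-1, r-1). -/
open Finset

private lemma card_sum_eq (r k : ℕ) :
    Nat.card {f : Fin r → ℕ // ∑ i, f i = k} = (r + k - 1).choose k := by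
  have e : {f : Fin r → ℕ // ∑ i, f i = k} ≃ Sym (Fin r) k := by
    refine Equiv.subtypeEquiv
      (Finsupp.equivFunOnFinite.symm.trans Multiset.toFinsupp.symm.toEquiv) ?_
    intro f
    have : Multiset.card (Finsupp.toMultiset (Finsupp.equivFunOnFinite.symm f))
        = ∑ i, f i := by
      rw [Finsupp.card_toMultiset, Finsupp.sum_fintype]
      · simp
      · simp
    constructor
    · intro hf; simpa [this] using hf
    · intro hf; simpa [this] using hf
  rw [Nat.card_congr e, Nat.card_eq_fintype_card, Sym.card_sym_eq_choose,
    Fintype.card_fin]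

private def eqvA (N r : ℕ) :
    {t : Fin r → Fin (N + 1) // (∀ b, 0 < (t b : ℕ)) ∧ (∑ b, (t b : ℕ)) = N}
      ≃ {f : Fin r → ℕ // (∀ b, 0 < f b) ∧ (∑ b, f b) = N} where
  toFun t := ⟨fun b => (t.1 b : ℕ), t.2⟩
  invFun f := ⟨fun b => ⟨f.1 b, by
    have h1 : f.1 b ≤ ∑ b, f.1 b := Finset.single_le_sum (fun i _ => Nat.zero_le _) (mem_univ b)
    have h2 := f.2.2
    omega⟩, ⟨fun b => f.2.1 b, f.2.2⟩⟩
  left_inv t := by ext b; rfl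
  right_inv f := by ext b; rfl

private def eqvB (N r : ℕ) (hr : 0 < r) (hrN : r ≤ N) :
    {f : Fin r → ℕ // (∀ b, 0 < f b) ∧ (∑ b, f b) = N}
      ≃ {g : Fin r → ℕ // ∑ b, g b = N - r} where
  toFun := fun ⟨f, hpos, hsum⟩ => ⟨fun b => f b - 1, by
    show ∑ b, (f b - 1) = N - r
    have h1 : ∑ b, (f b - 1 + 1) = N := by
      rw [← hsum]; exact Finset.sum_congr rfl fun b _ => Nat.succ_pred_eq_of_pos (hpos b)
    rw [Finset.sum_add_distrib, Finset.sum_const, card_univ, Fintype.card_fin,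
      smul_eq_mul, mul_one] at h1
    omega⟩
  invFun := fun ⟨g, hsum⟩ => ⟨fun b => g b + 1, by
    refine ⟨fun b => Nat.succ_pos _, ?_⟩
    show ∑ b, (g b + 1) = N
    rw [Finset.sum_add_distrib, Finset.sum_const, card_univ, Fintype.card_fin,
      smul_eq_mul, mul_one, hsum]
    omega⟩
  left_inv := fun ⟨f, hpos, hsum⟩ => by
    ext b; exact Nat.succ_pred_eq_of_pos (hpos b)
  right_inv := fun ⟨g, hsum⟩ => by ext b; simp

private lemma card_pos_sum (N r : ℕ) (hr : 0 < r) (hrN : r ≤ N) :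
    ((Finset.univ : Finset (Fin r → Fin (N + 1))).filter
        (fun t => (∀ b, 0 < (t b : ℕ)) ∧ (∑ b, (t b : ℕ)) = N)).card
      = (N - 1).choose (r - 1) := by
  classical
  rw [← Fintype.card_subtype, ← Nat.card_eq_fintype_card]
  rw [Nat.card_congr ((eqvA N r).trans (eqvB N r hr hrN)), card_sum_eq]
  have h1 : r + (N - r) - 1 = N - 1 := by omega
  have h2 : N - r = (N - 1) - (r - 1) := by omega
  rw [h1, h2, Nat.choose_symm (by omega)]

open Finset

private lemma cast_val_add_one {r : ℕ} [NeZero r] (b : Fin r) :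
    (((b + 1 : Fin r) : ℕ) : ZMod r) = ((b : ℕ) : ZMod r) + 1 := by
  have h1 : ((b + 1 : Fin r) : ℕ) = ((b : ℕ) + (1 : Fin r).val) % r := Fin.val_add b 1
  rw [h1, ZMod.natCast_mod]
  push_cast
  congr 1
  have h2 : ((1 : Fin r) : ℕ) = 1 % r := Fin.val_one' r
  rw [h2, ZMod.natCast_mod, Nat.cast_one]

private lemma cast_val_sub_one {r : ℕ} [NeZero r] (b : Fin r) :
    (((b - 1 : Fin r) : ℕ) : ZMod r) = ((b : ℕ) : ZMod r) - 1 := by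
  have h := cast_val_add_one (b - 1)
  rw [sub_add_cancel] at h
  rw [eq_sub_iff_add_eq]
  exact h.symm

private lemma rot_weight {N r : ℕ} [NeZero r] (t : Fin r → Fin (N + 1))
    (hsum : ∑ b, ((t b : ℕ)) = N) :
    ((∑ b : Fin r, ((b : ℕ) + 1) * ((t (b + 1) : ℕ)) : ℕ) : ZMod r)
      = ((∑ b : Fin r, ((b : ℕ) + 1) * (t b : ℕ) : ℕ) : ZMod r) - (N : ZMod r) := by
  have key : ∀ (u : Fin r → Fin (N + 1)),
      ((∑ b : Fin r, ((b : ℕ) + 1) * (u b : ℕ) : ℕ) : ZMod r)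
        = ∑ b : Fin r, (((b : ℕ) : ZMod r) + 1) * ((u b : ℕ) : ZMod r) := by
    intro u
    rw [Nat.cast_sum]
    exact Finset.sum_congr rfl fun b _ => by push_cast; ring
  have lhs : ((∑ b : Fin r, ((b : ℕ) + 1) * ((t (b + 1) : ℕ)) : ℕ) : ZMod r)
      = ∑ b : Fin r, (((b : ℕ) : ZMod r) + 1) * ((t (b + 1) : ℕ) : ZMod r) := by
    rw [Nat.cast_sum]
    exact Finset.sum_congr rfl fun b _ => by push_cast; ring
  rw [lhs, key t]
  have reindex : ∑ b : Fin r, (((b : ℕ) : ZMod r) + 1) * ((t (b + 1) : ℕ) : ZMod r)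
      = ∑ c : Fin r, ((((c - 1 : Fin r) : ℕ) : ZMod r) + 1) * ((t c : ℕ) : ZMod r) := by
    apply Fintype.sum_equiv (Equiv.addRight (1 : Fin r))
    intro b
    simp
  rw [reindex]
  have h3 : ∀ c : Fin r, ((((c - 1 : Fin r) : ℕ) : ZMod r) + 1) * ((t c : ℕ) : ZMod r)
      = (((c : ℕ) : ZMod r) + 1) * ((t c : ℕ) : ZMod r) - ((t c : ℕ) : ZMod r) := by
    intro c; rw [cast_val_sub_one]; ring
  rw [Finset.sum_congr rfl (fun c _ => h3 c), Finset.sum_sub_distrib]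
  congr 1
  rw [← Nat.cast_sum, hsum]

private def Fib (N r : ℕ) [NeZero r] (s : ZMod r) : Finset (Fin r → Fin (N + 1)) :=
  (Finset.univ : Finset (Fin r → Fin (N + 1))).filter
    (fun t => (∀ b, 0 < (t b : ℕ)) ∧ (∑ b, (t b : ℕ)) = N ∧
      s + ((∑ b : Fin r, ((b : ℕ) + 1) * (t b : ℕ) : ℕ) : ZMod r) = 0)

private lemma fib_step (N r : ℕ) [NeZero r] (s : ZMod r) :
    (Fib N r s).card = (Fib N r (s + N)).card := by
  apply Finset.card_nbij' (fun t => fun b => t (b + 1)) (fun t => fun b => t (b - 1))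
  · intro t ht
    simp only [Fib, Finset.mem_coe, Finset.mem_filter, Finset.mem_univ, true_and] at ht ⊢
    obtain ⟨hpos, hsum, hw⟩ := ht
    have hsum' : ∑ b : Fin r, ((t (b + 1) : ℕ)) = N :=
      (Fintype.sum_equiv (Equiv.addRight 1) _ (fun b => ((t b : ℕ)))
        (fun b => by simp)).trans hsum
    refine ⟨fun b => hpos _, hsum', ?_⟩
    rw [rot_weight t hsum]
    linear_combination hw
  · intro t ht
    simp only [Fib, Finset.mem_coe, Finset.mem_filter, Finset.mem_univ, true_and] at ht ⊢
    obtain ⟨hpos, hsum, hw⟩ := ht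
    have hsum' : ∑ b : Fin r, ((t (b - 1) : ℕ)) = N :=
      (Fintype.sum_equiv (Equiv.subRight 1) _ (fun b => ((t b : ℕ)))
        (fun b => by simp)).trans hsum
    refine ⟨fun b => hpos _, hsum', ?_⟩
    have hw2 := rot_weight (fun b => t (b - 1)) hsum'
    simp only [add_sub_cancel_right] at hw2
    rw [eq_sub_iff_add_eq] at hw2
    rw [← hw2]
    linear_combination hw
  · intro t ht; funext b; simp
  · intro t ht; funext b; simp

private lemma fib_sum (N r : ℕ) [NeZero r] :
    ∑ s : ZMod r, (Fib N r s).card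
      = ((Finset.univ : Finset (Fin r → Fin (N + 1))).filter
          (fun t => (∀ b, 0 < (t b : ℕ)) ∧ (∑ b, (t b : ℕ)) = N)).card := by
  rw [Finset.card_eq_sum_card_fiberwise
    (f := fun t : Fin r → Fin (N + 1) =>
      -((∑ b : Fin r, ((b : ℕ) + 1) * (t b : ℕ) : ℕ) : ZMod r))
    (t := Finset.univ) (fun x _ => Finset.mem_univ _)]
  apply Finset.sum_congr rfl
  intro s _
  congr 1
  ext t
  simp only [Fib, Finset.mem_filter, Finset.mem_univ, true_and]
  constructor
  · rintro ⟨h1, h2, h3⟩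
    exact ⟨⟨h1, h2⟩, by linear_combination -h3⟩
  · rintro ⟨⟨h1, h2⟩, h3⟩
    exact ⟨h1, h2, by linear_combination -h3⟩

private lemma fib_const (N r : ℕ) [NeZero r] (h : Nat.gcd N r = 1) (s₁ s₂ : ZMod r) :
    (Fib N r s₁).card = (Fib N r s₂).card := by
  have hiter : ∀ (k : ℕ) (s : ZMod r), (Fib N r s).card = (Fib N r (s + k * N)).card := by
    intro k
    induction k with
    | zero => intro s; simp
    | succ k ih =>
      intro s
      rw [ih s, fib_step N r (s + k * N)]
      congr 1
      push_cast
      ring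
  let u : (ZMod r)ˣ := ZMod.unitOfCoprime N h
  have hu : (u : ZMod r) = N := ZMod.coe_unitOfCoprime N h
  have key : s₁ + ((((s₂ - s₁) * (↑u⁻¹ : ZMod r)).val : ℕ) : ZMod r) * (N : ZMod r) = s₂ := by
    rw [ZMod.natCast_zmod_val, ← hu, mul_assoc, Units.inv_mul, mul_one]
    ring
  rw [hiter (((s₂ - s₁) * (↑u⁻¹ : ZMod r)).val) s₁, key]

/-- If gcd(N,r)=1, then for each residue s mod r the number of tuples
(t₁,...,t_r) of positive integers with ∑ t_α = N and s + ∑ β·t_β ≡ 0 (mod r)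
equals (1/r)·C(N-1, r-1). -/
theorem fiber_card_of_coprime (N r : ℕ) (hr : 0 < r) (hrN : r ≤ N)
    (h : Nat.gcd N r = 1) (s : ZMod r) :
    r * ((Finset.univ : Finset (Fin r → Fin (N + 1))).filter
        (fun t => (∀ b, 0 < (t b : ℕ)) ∧ (∑ b, (t b : ℕ)) = N ∧
          s + ((∑ b : Fin r, ((b : ℕ) + 1) * (t b : ℕ) : ℕ) : ZMod r) = 0)).card
      = (N - 1).choose (r - 1) := by
  haveI : NeZero r := ⟨hr.ne'⟩
  show r * (Fib N r s).card = (N - 1).choose (r - 1)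
  calc r * (Fib N r s).card
      = ∑ s' : ZMod r, (Fib N r s').card := by
        rw [Finset.sum_congr rfl (fun s' _ => fib_const N r h s' s), Finset.sum_const,
          Finset.card_univ, ZMod.card, smul_eq_mul]
    _ = _ := (fib_sum N r).trans (card_pos_sum N r hr hrN)
end
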